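/- arXiv:2501.01178 — 11 statements merged into one kernel-verified Lean document; each statement's English description precedes it below -/
import Mathlib

section
/- For n ≥ 1, W_{3n} = (3n)! · ∑_{t_1+2t_2+⋯+n t_n = n} multinomial(t_1+⋯+t_n; t_1,…,t_n) · ∏_{l=1}^{n} (-1/(3l)!)^{t_l}, where the sum is over nonnegative integers t_1,…,t_n. -/
/-!
The reciprocal of `∑ W_n t^n/n!` is `1 - g` with `g = 1 - ∑ t^{3l}/(3l)!` divisible by `t^3`, so
modulo `t^{3n+3}` the series `∑ W_n t^n/n!` agrees with `∑_{k ≤ n} g^k`, and `g` agrees with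
`-∑_{l=1}^{n} t^{3l}/(3l)!`. Expanding `(-∑_{l=1}^{n} t^{3l}/(3l)!)^k` by the multinomial theorem,
the terms contributing to `t^{3n}` are indexed by the `t` with `∑ l t_l = n`, and these all have
`k = ∑ t_l ≤ n`.
-/

open Finset PowerSeries

namespace PowerSeries

variable {R : Type*} [CommRing R]

theorem coeff_eq_coeff_of_X_pow_dvd_sub {a b : R⟦X⟧} {j m : ℕ} (h : X ^ j ∣ a - b)
    (hm : m < j) : coeff m a = coeff m b := by
  rw [← sub_eq_zero, ← map_sub]
  exact X_pow_dvd_iff.mp h m hm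

theorem coeff_pow_eq_coeff_pow_of_X_pow_dvd_sub {a b : R⟦X⟧} {j m : ℕ} (h : X ^ j ∣ a - b)
    (hm : m < j) (k : ℕ) : coeff m (a ^ k) = coeff m (b ^ k) :=
  coeff_eq_coeff_of_X_pow_dvd_sub (h.trans (sub_dvd_pow_sub_pow a b k)) hm

theorem coeff_eq_coeff_geom_sum_of_mul_one_sub_eq_one {P g : R⟦X⟧} {d N m : ℕ}
    (hP : P * (1 - g) = 1) (hg : X ^ d ∣ g) (hm : m < d * (N + 1)) :
    coeff m P = coeff m (∑ k ∈ range (N + 1), g ^ k) := by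
  refine coeff_eq_coeff_of_X_pow_dvd_sub ?_ hm
  have hgeom : P - ∑ k ∈ range (N + 1), g ^ k = P * g ^ (N + 1) := by
    linear_combination (∑ k ∈ range (N + 1), g ^ k) * hP - P * geom_sum_mul_neg g (N + 1)
  rw [hgeom, pow_mul]
  exact (pow_dvd_pow_of_dvd hg _).mul_left P

theorem coeff_sum_C_mul_X_pow_pow {ι : Type*} [DecidableEq ι] (s : Finset ι) (c : ι → R)
    (e : ι → ℕ) (k m : ℕ) :
    coeff m ((∑ i ∈ s, C (c i) * X ^ e i) ^ k) =
      ∑ t ∈ piAntidiag s k with ∑ i ∈ s, e i * t i = m,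
        (Nat.multinomial s t : R) * ∏ i ∈ s, c i ^ t i := by
  have hmonomial (t : ι → ℕ) : ∏ i ∈ s, (C (c i) * X ^ e i) ^ t i =
      C (∏ i ∈ s, c i ^ t i) * (X : R⟦X⟧) ^ ∑ i ∈ s, e i * t i := by
    simp only [mul_pow, prod_mul_distrib, map_prod, map_pow, ← pow_mul, prod_pow_eq_pow_sum]
  simp only [sum_pow_eq_sum_piAntidiag, map_sum, hmonomial, ← map_natCast (C (R := R)),
    ← mul_assoc, ← map_mul, coeff_C_mul_X_pow, sum_filter, eq_comm]

end PowerSeries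

theorem Finset.sum_piFinset_filter_weight_eq_sum_range_sum_piAntidiag {ι M : Type*} [Fintype ι]
    [DecidableEq ι] [AddCommMonoid M] {w : ι → ℕ} (hw : ∀ i, 0 < w i) (n : ℕ)
    (F : (ι → ℕ) → M) :
    ∑ t ∈ Fintype.piFinset (fun _ => range (n + 1)) with ∑ i, w i * t i = n, F t =
      ∑ k ∈ range (n + 1), ∑ t ∈ piAntidiag univ k with ∑ i, w i * t i = n, F t := by
  have hle (t : ι → ℕ) (i : ι) : t i ≤ w i * t i := Nat.le_mul_of_pos_left _ (hw i)
  rw [← sum_fiberwise_of_maps_to (g := fun t => ∑ i, t i) (t := range (n + 1))]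
  · refine sum_congr rfl fun k _ => sum_congr ?_ fun _ _ => rfl
    ext t
    simp only [mem_filter, Fintype.mem_piFinset, mem_range, mem_piAntidiag, mem_univ,
      implies_true, and_true]
    refine ⟨fun ⟨⟨_, hn⟩, hk⟩ => ⟨hk, hn⟩, fun ⟨hk, hn⟩ => ⟨⟨fun i => ?_, hn⟩, hk⟩⟩
    have := (hle t i).trans (hn ▸ single_le_sum (fun j _ => Nat.zero_le (w j * t j)) (mem_univ i))
    omega
  · intro t ht
    simp only [mem_filter] at ht
    have := ht.2 ▸ sum_le_sum fun i (_ : i ∈ univ) => hle t i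
    simp only [mem_range]
    omega

noncomputable def trisectedExp : ℚ⟦X⟧ := mk fun n => if 3 ∣ n then 1 / (n.factorial : ℚ) else 0

theorem X_pow_dvd_one_sub_trisectedExp_sub (n : ℕ) :
    X ^ (3 * (n + 1)) ∣ 1 - trisectedExp -
      ∑ l : Fin n, C (-1 / ((3 * (l.val + 1)).factorial : ℚ)) * X ^ (3 * (l.val + 1)) := by
  rw [X_pow_dvd_iff]
  intro m hm
  simp only [trisectedExp, map_sub, coeff_one, coeff_mk, map_sum, coeff_C_mul_X_pow]
  rcases Nat.eq_zero_or_pos m with rfl | hm0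
  · simp
  by_cases h3 : 3 ∣ m
  · obtain ⟨j, rfl⟩ : ∃ j, m = 3 * (j + 1) := by obtain ⟨i, rfl⟩ := h3; exact ⟨i - 1, by omega⟩
    rw [Fintype.sum_eq_single ⟨j, by omega⟩ fun l hl =>
        if_neg fun h => hl (Fin.ext (show l.val = j by omega)),
      if_neg (by omega), if_pos (dvd_mul_right 3 _), if_pos rfl]
    ring
  · rw [Fintype.sum_eq_zero _ fun l => if_neg fun h => h3 ⟨_, h⟩]
    simp [h3, hm0.ne']

theorem lehmer_euler_trudi_general (W : ℕ → ℚ)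
    (hW : (PowerSeries.mk fun n => W n / (n.factorial : ℚ)) *
      (PowerSeries.mk fun n => if 3 ∣ n then (1 : ℚ) / (n.factorial : ℚ) else 0) = 1)
    (n : ℕ) :
    W (3 * n) = ((3 * n).factorial : ℚ) *
      ∑ t ∈ (Fintype.piFinset fun _ : Fin n => Finset.range (n + 1)).filter
          (fun t => ∑ l : Fin n, (l.val + 1) * t l = n),
        (Nat.multinomial Finset.univ t : ℚ) *
          ∏ l : Fin n, (-(1 : ℚ) / ((3 * (l.val + 1)).factorial : ℚ)) ^ t l := by
  have hinv : (mk fun n => W n / (n.factorial : ℚ)) * (1 - (1 - trisectedExp)) = 1 := by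
    rwa [sub_sub_cancel]
  have hcoeff : W (3 * n) / ((3 * n).factorial : ℚ) = ∑ k ∈ range (n + 1), coeff (3 * n)
      ((∑ l : Fin n, C (-1 / ((3 * (l.val + 1)).factorial : ℚ)) * X ^ (3 * (l.val + 1))) ^ k) := by
    rw [← coeff_mk (3 * n) fun n => W n / (n.factorial : ℚ),
      coeff_eq_coeff_geom_sum_of_mul_one_sub_eq_one (N := n) hinv
        (by simpa using X_pow_dvd_one_sub_trisectedExp_sub 0) (by omega), map_sum]
    exact sum_congr rfl fun k _ => coeff_pow_eq_coeff_pow_of_X_pow_dvd_sub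
      (X_pow_dvd_one_sub_trisectedExp_sub n) (by omega) k
  have hweight (t : Fin n → ℕ) :
      ∑ l : Fin n, 3 * (l.val + 1) * t l = 3 * n ↔ ∑ l : Fin n, (l.val + 1) * t l = n := by
    simp only [mul_assoc, ← mul_sum]
    omega
  simp only [coeff_sum_C_mul_X_pow_pow, hweight] at hcoeff
  rw [sum_piFinset_filter_weight_eq_sum_range_sum_piAntidiag (w := fun l : Fin n => l.val + 1)
    fun _ => Nat.succ_pos _, ← hcoeff]
  field_simp

/-- Trudi-type formula: for `n ≥ 1`,
`W (3n) = (3n)! ∑_{t₁+2t₂+⋯+n tₙ = n} multinomial(t₁+⋯+tₙ; t₁,…,tₙ) ∏_{l=1}^n (-1/(3l)!)^{t_l}`. -/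
theorem lehmer_euler_trudi (W : ℕ → ℚ)
    (hW : (PowerSeries.mk fun n => W n / (n.factorial : ℚ)) *
      (PowerSeries.mk fun n => if 3 ∣ n then (1 : ℚ) / (n.factorial : ℚ) else 0) = 1)
    (n : ℕ) (hn : 1 ≤ n) :
    W (3 * n) = ((3 * n).factorial : ℚ) *
      ∑ t ∈ (Fintype.piFinset fun _ : Fin n => Finset.range (n + 1)).filter
          (fun t => ∑ l : Fin n, (l.val + 1) * t l = n),
        (Nat.multinomial Finset.univ t : ℚ) *
          ∏ l : Fin n, (-(1 : ℚ) / ((3 * (l.val + 1)).factorial : ℚ)) ^ t l :=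
  lehmer_euler_trudi_general W hW n
end

section
/- Every Lehmer-Euler number W_{3n} is an integer, and W_{3n} ≡ (-1)^n (mod 9) for all n ≥ 0. -/
open Finset

/-! Babbage's congruence `C(pn, pk) ≡ C(n, k) (mod p²)` turns the recursion modulo 9 into
`w n ≡ -∑_{k<n} C(n, k) w k`, which `(-1)^n` satisfies because `∑_{k≤n} (-1)^k C(n, k) = 0`
for `n ≥ 1`. Babbage's congruence follows by induction from Vandermonde's identity
`C(pn + p, pk + p) = ∑_{i+j = pk+p} C(pn, i) C(p, j)`: apart from the Pascal terms `j = 0` and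
`j = p`, every term is divisible by `p²`, since `p` divides `C(p, j)` and, by Lucas, `C(pn, i)`. -/

namespace Nat

variable {p : ℕ}

theorem Prime.dvd_choose_mul_of_not_dvd (hp : p.Prime) (n : ℕ) {j : ℕ} (hj : ¬p ∣ j) :
    p ∣ (p * n).choose j := by
  have := Fact.mk hp
  have hlucas := Choose.choose_modEq_choose_mod_mul_choose_div_nat (n := p * n) (k := j) (p := p)
  rw [Nat.mul_mod_right, choose_eq_zero_of_lt (pos_of_ne_zero (mt dvd_of_mod_eq_zero hj)),
    zero_mul] at hlucas
  exact modEq_zero_iff_dvd.mp hlucas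

theorem Prime.sq_dvd_choose_mul_mul_choose (hp : p.Prime) (n : ℕ) {i j : ℕ} (hij : p ∣ i + j)
    (hj₀ : j ≠ 0) (hjp : j ≠ p) : p ^ 2 ∣ (p * n).choose i * p.choose j := by
  rcases hjp.lt_or_gt with hlt | hgt
  · have hj : ¬p ∣ j := not_dvd_of_pos_of_lt (pos_of_ne_zero hj₀) hlt
    have hi : ¬p ∣ i := fun hi => hj ((Nat.dvd_add_right hi).mp hij)
    rw [sq]
    exact mul_dvd_mul (hp.dvd_choose_mul_of_not_dvd n hi) (hp.dvd_choose_self hj₀ hlt)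
  · simp [choose_eq_zero_of_lt hgt]

theorem Prime.choose_mul_modEq_choose (hp : p.Prime) (n k : ℕ) :
    (p * n).choose (p * k) ≡ n.choose k [MOD p ^ 2] := by
  induction n generalizing k with
  | zero =>
    cases k with
    | zero => rfl
    | succ k => rw [choose_eq_zero_of_lt (by simp [hp.pos]), choose_zero_succ]
  | succ n ih =>
    cases k with
    | zero => simp [ModEq.refl]
    | succ k =>
      have hvandermonde : (p * (n + 1)).choose (p * (k + 1)) ≡
          (p * n).choose (p * k) + (p * n).choose (p * (k + 1)) [MOD p ^ 2] := by
        rw [← ZMod.natCast_eq_natCast_iff, mul_add_one p n, add_choose_eq]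
        push_cast
        rw [sum_eq_add_of_mem (p * k, p) (p * (k + 1), 0) (by simp [mul_add_one]) (by simp)
          (by simp [hp.ne_zero])]
        · simp
        · rintro ⟨i, j⟩ hij ⟨h1, h2⟩
          rw [HasAntidiagonal.mem_antidiagonal] at hij
          rw [← Nat.cast_mul, ZMod.natCast_eq_zero_iff]
          refine hp.sq_dvd_choose_mul_mul_choose n ⟨k + 1, hij⟩ ?_ ?_
          · rintro rfl; exact h2 (by simp_all)
          · rintro rfl; exact h1 (by simp [mul_add_one] at hij ⊢; omega)
      rw [choose_succ_succ']
      exact hvandermonde.trans ((ih k).add (ih (k + 1)))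

end Nat

theorem modEq_neg_one_pow_of_choose_mul_rec {p : ℕ} (hp : p.Prime) {z : ℕ → ℤ}
    (h0 : z 0 = 1)
    (hrec : ∀ n, 1 ≤ n →
      z n = -∑ k ∈ Finset.range n, ((p * n).choose (p * k) : ℤ) * z k) (n : ℕ) :
    z n ≡ (-1) ^ n [ZMOD p ^ 2] := by
  induction n using Nat.strong_induction_on with
  | _ n ih =>
    rcases n with _ | m
    · rw [h0, pow_zero]
    · have hsum : ∑ k ∈ Finset.range (m + 1), ((p * (m + 1)).choose (p * k) : ℤ) * z k ≡
          ∑ k ∈ Finset.range (m + 1), (-1) ^ k * ((m + 1).choose k : ℤ) [ZMOD p ^ 2] := by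
        refine Int.ModEq.sum fun k hk => ?_
        rw [mul_comm]
        refine Int.ModEq.mul (ih k (mem_range.mp hk)) ?_
        exact_mod_cast Int.natCast_modEq_iff.mpr (hp.choose_mul_modEq_choose (m + 1) k)
      rw [Int.alternating_sum_range_choose_eq_choose, Nat.choose_self, Nat.cast_one,
        mul_one] at hsum
      rw [hrec (m + 1) m.succ_pos, pow_succ (-1 : ℤ), mul_neg_one]
      exact hsum.neg

theorem exists_intCast_eq_of_rec {a : ℕ → ℚ} (c : ℕ → ℕ → ℕ) (h0 : a 0 = 1)
    (hrec : ∀ n, 1 ≤ n → a n = -∑ k ∈ Finset.range n, (c n k : ℚ) * a k) (n : ℕ) :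
    ∃ z : ℤ, a n = z := by
  suffices a n ∈ (Int.castRingHom ℚ).range by simpa [eq_comm] using this
  induction n using Nat.strong_induction_on with
  | _ n ih =>
    rcases n with _ | m
    · simp [h0]
    · rw [hrec (m + 1) m.succ_pos]
      exact neg_mem <| sum_mem fun k hk =>
        mul_mem (natCast_mem _ _) (ih k (mem_range.mp hk))

/-- Every Lehmer-Euler number `W (3n)` is an integer and `W (3n) ≡ (-1)^n (mod 9)`. -/
theorem lehmer_euler_integer_and_mod_nine (W : ℕ → ℚ)
    (hW0 : W 0 = 1)
    (hWrec : ∀ n : ℕ, 1 ≤ n →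
      W (3 * n) = -∑ k ∈ Finset.range n, (Nat.choose (3 * n) (3 * k) : ℚ) * W (3 * k)) :
    ∀ n : ℕ, ∃ z : ℤ, W (3 * n) = (z : ℚ) ∧ z ≡ (-1) ^ n [ZMOD 9] := by
  choose z hz using exists_intCast_eq_of_rec (a := fun n => W (3 * n))
    (fun n k => (3 * n).choose (3 * k)) hW0 hWrec
  have hz0 : z 0 = 1 := by exact_mod_cast (hz 0).symm.trans hW0
  have hzrec : ∀ n, 1 ≤ n → z n = -∑ k ∈ Finset.range n, ((3 * n).choose (3 * k) : ℤ) * z k := by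
    intro n hn
    have := hWrec n hn
    simp only [hz] at this
    exact_mod_cast this
  exact fun n =>
    ⟨z n, hz n, modEq_neg_one_pow_of_choose_mul_rec Nat.prime_three hz0 hzrec n⟩
end

section
/- For every positive integer n, ∑_{k=0}^{n} (-1)^k · C(3n, 3k) = 3^{n-1} · ((-√-3)^n + (√-3)^n). In particular, this sum equals 0 when n is odd, and equals 2·(-1)^{n/2}·3^{3n/2 - 1} when n is even. -/
/-!
Roots-of-unity filter: for a primitive cube root of unity `ω = (s - 1) / 2`, summing
`(1 - ω ^ i) ^ (3 * n)` over `i = 0, 1, 2` keeps exactly three times the terms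
`(-1) ^ j * C(3n, j)` with `3 ∣ j`. As `(1 - ω) ^ 3 = -3 * s` and `(1 - ω ^ 2) ^ 3 = 3 * s`,
the sum equals `((-3 * s) ^ n + (3 * s) ^ n) / 3`; the parity cases then follow from `s ^ 2 = -3`.
-/

open Finset

namespace IsPrimitiveRoot

variable {R : Type*} [CommRing R] [IsDomain R] {ζ : R} {d : ℕ}

theorem sum_range_pow_mul_eq_ite (hζ : IsPrimitiveRoot ζ d) (j : ℕ) :
    ∑ i ∈ range d, ζ ^ (i * j) = if d ∣ j then (d : R) else 0 := by
  split_ifs with hdj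
  · simp [pow_mul', (hζ.pow_eq_one_iff_dvd j).2 hdj]
  · have hne : ζ ^ j ≠ 1 := mt (hζ.pow_eq_one_iff_dvd j).1 hdj
    have hgeom : (∑ i ∈ range d, (ζ ^ j) ^ i) * (ζ ^ j - 1) = 0 := by
      rw [geom_sum_mul, ← pow_mul, mul_comm, pow_mul, hζ.pow_eq_one, one_pow, sub_self]
    simpa [pow_mul', sub_eq_zero, hne] using hgeom

theorem sum_range_one_add_mul_pow (hζ : IsPrimitiveRoot ζ d) (x : R) (N : ℕ) :
    ∑ i ∈ range d, (1 + ζ ^ i * x) ^ N =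
      d * ∑ j ∈ range (N + 1) with d ∣ j, x ^ j * N.choose j := by
  simp_rw [add_comm (1 : R), add_pow, one_pow, mul_one, mul_pow, ← pow_mul]
  rw [sum_comm, sum_filter, mul_sum]
  refine sum_congr rfl fun j _ => ?_
  rw [← sum_mul, ← sum_mul, hζ.sum_range_pow_mul_eq_ite]
  split_ifs <;> ring

end IsPrimitiveRoot

theorem Finset.sum_range_filter_dvd {M : Type*} [AddCommMonoid M] (f : ℕ → M) {d : ℕ}
    (hd : 0 < d) (n : ℕ) :
    ∑ j ∈ range (d * n + 1) with d ∣ j, f j = ∑ k ∈ range (n + 1), f (d * k) := by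
  have hmultiples : (range (d * n + 1)).filter (d ∣ ·) = (range (n + 1)).image (d * ·) := by
    ext j
    simp only [mem_filter, mem_range, mem_image]
    constructor
    · rintro ⟨hj, k, rfl⟩
      exact ⟨k, by nlinarith, rfl⟩
    · rintro ⟨k, hk, rfl⟩
      exact ⟨by nlinarith, dvd_mul_right d k⟩
  rw [hmultiples, sum_image fun a _ b _ h => Nat.eq_of_mul_eq_mul_left hd h]

theorem isPrimitiveRoot_three_of_sq_add_self_add_one {R : Type*} [CommRing R] [NeZero (3 : R)]
    {ω : R} (h : ω ^ 2 + ω + 1 = 0) : IsPrimitiveRoot ω 3 := by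
  have hcube : ω ^ 3 = 1 := by linear_combination (ω - 1) * h
  have hne : ω ≠ 1 := by
    rintro rfl
    exact NeZero.ne (3 : R) (by linear_combination h)
  exact IsPrimitiveRoot.iff_orderOf.2 (orderOf_eq_prime hcube hne)

theorem sum_neg_one_pow_mul_choose_three_mul {K : Type*} [Field K] [CharZero K] {s : K}
    (hs : s ^ 2 = -3) {n : ℕ} (hn : n ≠ 0) :
    ∑ k ∈ range (n + 1), (-1 : K) ^ k * (3 * n).choose (3 * k) =
      3 ^ (n - 1) * ((-s) ^ n + s ^ n) := by
  obtain ⟨ω, rfl⟩ : ∃ ω : K, s = 2 * ω + 1 := ⟨(s - 1) / 2, by ring⟩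
  have hω : ω ^ 2 + ω + 1 = 0 := by linear_combination hs / 4
  have hfilter :=
    (isPrimitiveRoot_three_of_sq_add_self_add_one hω).sum_range_one_add_mul_pow (-1) (3 * n)
  rw [sum_range_filter_dvd _ three_pos] at hfilter
  simp only [pow_mul, Odd.neg_one_pow (by decide : Odd 3), Nat.cast_ofNat] at hfilter
  rw [sum_range_succ, sum_range_succ, sum_range_one] at hfilter
  have h1 : (1 + ω ^ 1 * -1) ^ 3 = 3 * -(2 * ω + 1) := by linear_combination (4 - ω) * hω
  have h2 : (1 + ω ^ 2 * -1) ^ 3 = 3 * (2 * ω + 1) := by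
    linear_combination (-ω ^ 4 + ω ^ 3 + 3 * ω ^ 2 - 4 * ω - 2) * hω
  rw [h1, h2, pow_zero, one_mul, add_neg_cancel, zero_pow three_ne_zero, zero_pow hn, mul_pow,
    mul_pow] at hfilter
  obtain ⟨m, rfl⟩ : ∃ m, n = m + 1 := ⟨n - 1, by omega⟩
  rw [pow_succ'] at hfilter
  rw [Nat.add_sub_cancel]
  linear_combination -hfilter / 3

theorem sum_neg_one_pow_mul_choose_three_mul_of_odd {n : ℕ} (hn : Odd n) :
    ∑ k ∈ range (n + 1), (-1 : ℤ) ^ k * (3 * n).choose (3 * k) = 0 := by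
  obtain ⟨s, hs⟩ := IsAlgClosed.exists_pow_nat_eq (-3 : ℂ) two_pos
  have hsum := sum_neg_one_pow_mul_choose_three_mul hs hn.pos.ne'
  rw [hn.neg_pow, neg_add_cancel, mul_zero] at hsum
  exact_mod_cast hsum

theorem sum_neg_one_pow_mul_choose_three_mul_of_even {n : ℕ} (he : Even n) (hn : n ≠ 0) :
    ∑ k ∈ range (n + 1), (-1 : ℤ) ^ k * (3 * n).choose (3 * k) =
      2 * (-1) ^ (n / 2) * 3 ^ (3 * n / 2 - 1) := by
  obtain ⟨s, hs⟩ := IsAlgClosed.exists_pow_nat_eq (-3 : ℂ) two_pos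
  obtain ⟨m, rfl⟩ := he
  have hpow : s ^ (m + m) = (-3) ^ m := by rw [← two_mul, pow_mul, hs]
  have hexp : 3 * (m + m) / 2 - 1 = (m + m - 1) + m := by omega
  have hsum : ∑ k ∈ range (m + m + 1), (-1 : ℂ) ^ k * (3 * (m + m)).choose (3 * k) =
      2 * (-1) ^ ((m + m) / 2) * 3 ^ (3 * (m + m) / 2 - 1) := by
    rw [sum_neg_one_pow_mul_choose_three_mul hs hn, Even.neg_pow ⟨m, rfl⟩, hpow, hexp,
      show (m + m) / 2 = m by omega, pow_add, neg_pow]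
    ring
  exact_mod_cast hsum

/-- `∑_{k=0}^n (-1)^k C(3n,3k) = 3^{n-1}((-√-3)^n + (√-3)^n)`; in particular the sum is
`0` for odd `n` and `2·(-1)^{n/2}·3^{3n/2-1}` for even `n`. -/
theorem binom_sum_three (n : ℕ) (hn : 1 ≤ n) (s : ℂ) (hs : s ^ 2 = -3) :
    (∑ k ∈ Finset.range (n + 1), (-1 : ℂ) ^ k * (Nat.choose (3 * n) (3 * k) : ℂ)) =
      3 ^ (n - 1) * ((-s) ^ n + s ^ n) ∧
    (Odd n → (∑ k ∈ Finset.range (n + 1), (-1 : ℤ) ^ k * (Nat.choose (3 * n) (3 * k) : ℤ)) = 0) ∧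
    (Even n → (∑ k ∈ Finset.range (n + 1), (-1 : ℤ) ^ k * (Nat.choose (3 * n) (3 * k) : ℤ)) =
      2 * (-1) ^ (n / 2) * 3 ^ (3 * n / 2 - 1)) :=
  ⟨sum_neg_one_pow_mul_choose_three_mul hs (by omega),
    sum_neg_one_pow_mul_choose_three_mul_of_odd,
    fun he => sum_neg_one_pow_mul_choose_three_mul_of_even he (by omega)⟩
end

section
/- For every positive integer n, ∑_{k=0}^{n} (-1)^k · C(3n+1, 3k) equals (-1)^{(n+1)/2}·3^{(3n-1)/2} when n is odd, and (-1)^{n/2}·3^{3n/2} when n is even. -/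
/-!
Let `ζ` be a root of `X² - X + 1`, so that `ζ`, `1 - ζ` and `-1` are the three cube roots of `-1`.
Adding the binomial expansions of `(1 + x) ^ N` for these three values of `x` keeps exactly the
terms `C(N, 3k)`, with sign `(-1) ^ k`, so `3 ∑ₖ (-1)ᵏ C(N, 3k) = (1 + ζ) ^ N + (2 - ζ) ^ N` for
`N > 0`. As `(1 + ζ) ^ 2 = 3ζ`, both `1 + ζ` and `2 - ζ` have sixth power `-27`, so the sum is
multiplied by `-27` when `N` grows by `6`; the cases `N = 1` and `N = 4` then give the two formulas.
-/

open Finset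

def altChooseThreeMulSum (N : ℕ) : ℤ :=
  ∑ k ∈ range (N / 3 + 1), (-1) ^ k * (N.choose (3 * k) : ℤ)

section CubeRootsOfNegOne

variable {R : Type*} [CommRing R] {ζ : R}

theorem pow_add_one_sub_pow_add_neg_one_pow (hζ : ζ ^ 2 - ζ + 1 = 0) (j : ℕ) :
    ζ ^ j + (1 - ζ) ^ j + (-1) ^ j = if 3 ∣ j then 3 * (-1) ^ (j / 3) else 0 := by
  have hζ₃ : ζ ^ 3 = -1 := by linear_combination (ζ + 1) * hζ
  have hζ₃' : (1 - ζ) ^ 3 = -1 := by linear_combination (2 - ζ) * hζ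
  obtain ⟨q, rfl | rfl | rfl⟩ : ∃ q, j = 3 * q ∨ j = 3 * q + 1 ∨ j = 3 * q + 2 :=
    ⟨j / 3, by omega⟩
  · simp only [dvd_mul_right, if_true, Nat.mul_div_cancel_left _ three_pos, pow_mul, hζ₃, hζ₃']
    ring
  · rw [if_neg (by omega)]
    simp only [pow_succ, pow_mul, hζ₃, hζ₃']
    ring
  · rw [if_neg (by omega)]
    simp only [pow_add, pow_mul, hζ₃, hζ₃']
    linear_combination 2 * (-1) ^ q * hζ

theorem three_mul_altChooseThreeMulSum (hζ : ζ ^ 2 - ζ + 1 = 0) (N : ℕ) :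
    3 * (altChooseThreeMulSum N : R) = (1 + ζ) ^ N + (2 - ζ) ^ N + 0 ^ N := by
  have expand (x : R) : (1 + x) ^ N = ∑ j ∈ range (N + 1), (x ^ j * N.choose j : R) := by
    rw [add_comm, add_pow]; simp
  have multiples : (range (N / 3 + 1)).image (3 * ·) = (range (N + 1)).filter (3 ∣ ·) := by
    ext j; simp only [mem_image, mem_range, mem_filter]; constructor
    · rintro ⟨k, hk, rfl⟩; omega
    · rintro ⟨hj, k, rfl⟩; exact ⟨k, by omega, rfl⟩
  calc 3 * (altChooseThreeMulSum N : R)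
      = ∑ j ∈ (range (N / 3 + 1)).image (3 * ·), 3 * (-1) ^ (j / 3) * (N.choose j : R) := by
        rw [sum_image fun _ _ _ _ h => by simpa using h, altChooseThreeMulSum]
        push_cast
        rw [mul_sum]
        refine sum_congr rfl fun k _ => ?_
        rw [Nat.mul_div_cancel_left _ three_pos]; ring
    _ = ∑ j ∈ range (N + 1), (ζ ^ j + (1 - ζ) ^ j + (-1) ^ j) * (N.choose j : R) := by
        simp only [multiples, sum_filter, pow_add_one_sub_pow_add_neg_one_pow hζ, ite_mul,
          zero_mul]
    _ = (1 + ζ) ^ N + (1 + (1 - ζ)) ^ N + (1 + -1) ^ N := by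
        simp only [add_mul, sum_add_distrib, expand]
    _ = (1 + ζ) ^ N + (2 - ζ) ^ N + 0 ^ N := by ring_nf

theorem one_add_pow_six (hζ : ζ ^ 2 - ζ + 1 = 0) : (1 + ζ) ^ 6 = -27 := by
  have hsq : (1 + ζ) ^ 2 = 3 * ζ := by linear_combination hζ
  calc (1 + ζ) ^ 6 = 27 * ζ ^ 3 := by rw [show 6 = 2 * 3 by rfl, pow_mul, hsq]; ring
    _ = -27 := by linear_combination 27 * (ζ + 1) * hζ

theorem sq_sub_add_one_one_sub (hζ : ζ ^ 2 - ζ + 1 = 0) : (1 - ζ) ^ 2 - (1 - ζ) + 1 = 0 := by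
  linear_combination hζ

end CubeRootsOfNegOne

theorem altChooseThreeMulSum_six_mul_add (m : ℕ) {r : ℕ} (hr : 0 < r) :
    altChooseThreeMulSum (6 * m + r) = (-27) ^ m * altChooseThreeMulSum r := by
  obtain ⟨s, hs⟩ := IsAlgClosed.exists_eq_mul_self (-3 : ℂ)
  set ζ := (1 + s) / 2
  have hζ : ζ ^ 2 - ζ + 1 = 0 := by linear_combination (-1 / 4) * hs
  have hζ₆ := one_add_pow_six hζ
  have hζ₆' := one_add_pow_six (sq_sub_add_one_one_sub hζ)
  rw [show 1 + (1 - ζ) = 2 - ζ by ring] at hζ₆'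
  have h : (3 : ℂ) * altChooseThreeMulSum (6 * m + r) =
      3 * ((-27) ^ m * altChooseThreeMulSum r) := by
    rw [mul_left_comm, three_mul_altChooseThreeMulSum hζ, three_mul_altChooseThreeMulSum hζ,
      zero_pow hr.ne', zero_pow (by omega), pow_add, pow_add, pow_mul, pow_mul, hζ₆, hζ₆']
    ring
  exact_mod_cast mul_left_cancel₀ three_ne_zero h

theorem altChooseThreeMulSum_one : altChooseThreeMulSum 1 = 1 := by decide

theorem altChooseThreeMulSum_four : altChooseThreeMulSum 4 = -3 := by decide

theorem binom_sum_three_n_plus_one_general (n : ℕ) :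
    (Odd n → (∑ k ∈ Finset.range (n + 1),
        (-1 : ℤ) ^ k * (Nat.choose (3 * n + 1) (3 * k) : ℤ)) =
      (-1) ^ ((n + 1) / 2) * 3 ^ ((3 * n - 1) / 2)) ∧
    (Even n → (∑ k ∈ Finset.range (n + 1),
        (-1 : ℤ) ^ k * (Nat.choose (3 * n + 1) (3 * k) : ℤ)) =
      (-1) ^ (n / 2) * 3 ^ (3 * n / 2)) := by
  have hS : ∑ k ∈ range (n + 1), (-1 : ℤ) ^ k * (Nat.choose (3 * n + 1) (3 * k) : ℤ) =
      altChooseThreeMulSum (3 * n + 1) := by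
    rw [altChooseThreeMulSum, show (3 * n + 1) / 3 = n by omega]
  have neg_27_pow (m : ℕ) : (-27 : ℤ) ^ m = (-1) ^ m * 3 ^ (3 * m) := by
    rw [pow_mul, ← mul_pow]; norm_num
  rw [hS]
  refine ⟨fun ⟨m, hm⟩ => ?_, fun ⟨m, hm⟩ => ?_⟩
  · rw [hm, show 3 * (2 * m + 1) + 1 = 6 * m + 4 by ring,
      altChooseThreeMulSum_six_mul_add m (by norm_num), altChooseThreeMulSum_four, neg_27_pow,
      show (2 * m + 1 + 1) / 2 = m + 1 by omega,
      show (3 * (2 * m + 1) - 1) / 2 = 3 * m + 1 by omega]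
    ring
  · rw [hm, show 3 * (m + m) + 1 = 6 * m + 1 by ring,
      altChooseThreeMulSum_six_mul_add m (by norm_num), altChooseThreeMulSum_one, neg_27_pow,
      show (m + m) / 2 = m by omega, show 3 * (m + m) / 2 = 3 * m by omega, mul_one]

/-- `∑_{k=0}^{n} (-1)^k C(3n+1,3k)` equals `(-1)^{(n+1)/2}·3^{(3n-1)/2}` for odd `n`
and `(-1)^{n/2}·3^{3n/2}` for even `n`. -/
theorem binom_sum_three_n_plus_one (n : ℕ) (hn : 1 ≤ n) :
    (Odd n → (∑ k ∈ Finset.range (n + 1),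
        (-1 : ℤ) ^ k * (Nat.choose (3 * n + 1) (3 * k) : ℤ)) =
      (-1) ^ ((n + 1) / 2) * 3 ^ ((3 * n - 1) / 2)) ∧
    (Even n → (∑ k ∈ Finset.range (n + 1),
        (-1 : ℤ) ^ k * (Nat.choose (3 * n + 1) (3 * k) : ℤ)) =
      (-1) ^ (n / 2) * 3 ^ (3 * n / 2)) :=
  binom_sum_three_n_plus_one_general n
end

section
/- For every positive integer n, ∑_{k=0}^{n} (-1)^k · C(3n+2, 3k) equals (-1)^{(n+1)/2}·3^{(3n+1)/2} when n is odd, and (-1)^{n/2}·3^{3n/2} when n is even. -/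
/-!
In `ℤ[X]/(X³ + 1)` the power `(1 + X)^N` reduces to `a_N + b_N X + c_N X²`, where `a_N` is the
sum `∑ₖ (-1)^k C(N, 3k)` and `b_N`, `c_N` are its shifts by one and two. Since
`(1 + X)³ = 3X(1 + X)`, we get `(1 + X)⁷ = 27X³(1 + X) = -27(1 + X)`, hence `a_{N+6} = -27 a_N`
for `N ≥ 1`. The two residues of `3n + 2` modulo `6` start from `a_2 = 1` and `a_5 = -9`.
-/

open Finset

namespace ChooseTrisection

/-- The coefficient of `X^r` in `(1 + X)^N` reduced modulo `X³ + 1`, for `r < 3`. -/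
def coeff (N r : ℕ) : ℤ :=
  ∑ k ∈ range (N + 1), (-1) ^ k * (N.choose (3 * k + r) : ℤ)

theorem coeff_succ_succ (N r : ℕ) : coeff (N + 1) (r + 1) = coeff N r + coeff N (r + 1) := by
  rw [coeff, sum_range_succ, Nat.choose_eq_zero_of_lt (by omega), Nat.cast_zero, mul_zero,
    add_zero, coeff, coeff, ← sum_add_distrib]
  refine sum_congr rfl fun k _ => ?_
  rw [← add_assoc, Nat.choose_succ_succ, Nat.cast_add, mul_add]

theorem coeff_eq_sum_range {N r K : ℕ} (hK : N < 3 * K + r) :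
    coeff N r = ∑ k ∈ range K, (-1) ^ k * (N.choose (3 * k + r) : ℤ) := by
  have vanish (L : ℕ) (hL : N < 3 * L + r) : ∀ k ≥ L, (-1) ^ k * (N.choose (3 * k + r) : ℤ) = 0 :=
    fun k hk => by rw [Nat.choose_eq_zero_of_lt (by omega), Nat.cast_zero, mul_zero]
  rw [coeff, ← eventually_constant_sum (vanish (N + 1) (by omega)) (le_max_left _ K),
    eventually_constant_sum (vanish K hK) (le_max_right _ _)]

theorem coeff_succ_zero (N : ℕ) : coeff (N + 1) 0 = coeff N 0 - coeff N 2 := by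
  rw [coeff, sum_range_succ', coeff_eq_sum_range (K := N + 1 + 1) (by omega),
    sum_range_succ' _ (N + 1), coeff, add_sub_right_comm, ← sum_sub_distrib]
  congr 1
  · refine sum_congr rfl fun k _ => ?_
    rw [show 3 * (k + 1) + 0 = 3 * k + 2 + 1 by ring, Nat.choose_succ_succ]
    push_cast
    ring
  · simp

/-- Multiplication by `1 + X` in the basis `1, X, X²` of `ℤ[X]/(X³ + 1)`. -/
def mulOneAddX (v : ℤ × ℤ × ℤ) : ℤ × ℤ × ℤ :=
  (v.1 - v.2.2, v.1 + v.2.1, v.2.1 + v.2.2)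

theorem mulOneAddX_iterate_seven (v : ℤ × ℤ × ℤ) :
    mulOneAddX^[7] v = (-27 : ℤ) • mulOneAddX v := by
  obtain ⟨a, b, c⟩ := v
  simp only [Function.iterate_succ_apply', Function.iterate_zero_apply, mulOneAddX, Prod.smul_mk,
    smul_eq_mul, Prod.mk.injEq]
  refine ⟨?_, ?_, ?_⟩ <;> ring

def coeffs (N : ℕ) : ℤ × ℤ × ℤ := (coeff N 0, coeff N 1, coeff N 2)

theorem coeffs_succ (N : ℕ) : coeffs (N + 1) = mulOneAddX (coeffs N) := by
  simp only [coeffs, mulOneAddX, coeff_succ_zero, coeff_succ_succ N 0, coeff_succ_succ N 1]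

theorem coeffs_add (N k : ℕ) : coeffs (N + k) = mulOneAddX^[k] (coeffs N) := by
  induction k with
  | zero => rfl
  | succ k ih => rw [← add_assoc, coeffs_succ, ih, Function.iterate_succ_apply']

theorem coeff_zero_add_six {N : ℕ} (hN : 1 ≤ N) : coeff (N + 6) 0 = -27 * coeff N 0 := by
  obtain ⟨M, rfl⟩ := Nat.exists_eq_add_of_le' hN
  have h : coeffs (M + 7) = (-27 : ℤ) • coeffs (M + 1) := by
    rw [coeffs_add, mulOneAddX_iterate_seven, ← coeffs_succ]
  exact congrArg Prod.fst h

theorem coeff_zero_add_six_mul {N : ℕ} (hN : 1 ≤ N) (m : ℕ) :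
    coeff (N + 6 * m) 0 = (-1) ^ m * 3 ^ (3 * m) * coeff N 0 := by
  induction m with
  | zero => simp
  | succ m ih =>
    rw [Nat.mul_succ, ← add_assoc, coeff_zero_add_six (by omega), ih, pow_succ, Nat.mul_succ,
      pow_add]
    ring

theorem coeff_zero_six_mul_add_two (m : ℕ) : coeff (6 * m + 2) 0 = (-1) ^ m * 3 ^ (3 * m) := by
  rw [add_comm, coeff_zero_add_six_mul (by norm_num), show coeff 2 0 = 1 by decide, mul_one]

theorem coeff_zero_six_mul_add_five (m : ℕ) :
    coeff (6 * m + 5) 0 = (-1) ^ (m + 1) * 3 ^ (3 * m + 2) := by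
  rw [add_comm, coeff_zero_add_six_mul (by norm_num), show coeff 5 0 = -9 by decide]
  ring

end ChooseTrisection

theorem binom_sum_three_n_plus_two_general (n : ℕ) :
    (Odd n → (∑ k ∈ Finset.range (n + 1),
        (-1 : ℤ) ^ k * (Nat.choose (3 * n + 2) (3 * k) : ℤ)) =
      (-1) ^ ((n + 1) / 2) * 3 ^ ((3 * n + 1) / 2)) ∧
    (Even n → (∑ k ∈ Finset.range (n + 1),
        (-1 : ℤ) ^ k * (Nat.choose (3 * n + 2) (3 * k) : ℤ)) =
      (-1) ^ (n / 2) * 3 ^ (3 * n / 2)) := by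
  have hsum : ∑ k ∈ range (n + 1), (-1 : ℤ) ^ k * ((3 * n + 2).choose (3 * k) : ℤ) =
      ChooseTrisection.coeff (3 * n + 2) 0 :=
    (ChooseTrisection.coeff_eq_sum_range (r := 0) (K := n + 1) (by omega)).symm
  rw [hsum]
  constructor
  · rintro ⟨m, rfl⟩
    rw [show 3 * (2 * m + 1) + 2 = 6 * m + 5 by ring, ChooseTrisection.coeff_zero_six_mul_add_five,
      show (2 * m + 1 + 1) / 2 = m + 1 by omega, show (3 * (2 * m + 1) + 1) / 2 = 3 * m + 2 by omega]
  · rintro ⟨m, rfl⟩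
    rw [show 3 * (m + m) + 2 = 6 * m + 2 by ring, ChooseTrisection.coeff_zero_six_mul_add_two,
      show (m + m) / 2 = m by omega, show 3 * (m + m) / 2 = 3 * m by omega]

/-- `∑_{k=0}^{n} (-1)^k C(3n+2,3k)` equals `(-1)^{(n+1)/2}·3^{(3n+1)/2}` for odd `n`
and `(-1)^{n/2}·3^{3n/2}` for even `n`. -/
theorem binom_sum_three_n_plus_two (n : ℕ) (hn : 1 ≤ n) :
    (Odd n → (∑ k ∈ Finset.range (n + 1),
        (-1 : ℤ) ^ k * (Nat.choose (3 * n + 2) (3 * k) : ℤ)) =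
      (-1) ^ ((n + 1) / 2) * 3 ^ ((3 * n + 1) / 2)) ∧
    (Even n → (∑ k ∈ Finset.range (n + 1),
        (-1 : ℤ) ^ k * (Nat.choose (3 * n + 2) (3 * k) : ℤ)) =
      (-1) ^ (n / 2) * 3 ^ (3 * n / 2)) :=
  binom_sum_three_n_plus_two_general n
end

section
/- For every positive integer n, ∑_{k=0}^{n} (-1)^{k-1} · C(3n+2, 3k+1) equals 0 when n is odd, and (-1)^{n/2 - 1}·2·3^{3n/2} when n is even. -/
/-!
Roots-of-unity filter. For a root `z` of `X ^ 2 - X + 1`, the three roots of `X ^ 3 + 1` are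
`-1`, `z`, `1 - z`, and their `i`-th power sum is `3 (-1) ^ (i / 3)` or `0` according as `3 ∣ i`
or not. Expanding `x ^ 2 (1 + x) ^ (3n + 2)` and summing over these roots therefore extracts
three times the sum, the root `-1` contributing nothing. Since `(1 + z) ^ 2 = 3 z` and
`z ^ 3 = -1`, the two remaining terms both equal `(-1) ^ (t + 1) 3 ^ (3t + 1)` when `n = 2t`,
and are opposite when `n = 2t + 1`.
-/

open Finset

theorem Finset.sum_range_mul_eq_sum_of_eq_zero {M : Type*} [AddCommMonoid M] {d r : ℕ}
    (hr : r < d) (g : ℕ → M) (hg : ∀ j, j % d ≠ r → g j = 0) (N : ℕ) :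
    ∑ j ∈ range (d * N), g j = ∑ k ∈ range N, g (d * k + r) := by
  induction N with
  | zero => simp
  | succ N ih =>
    rw [Nat.mul_succ, sum_range_add, ih, sum_range_succ]
    congr 1
    refine sum_eq_single r (fun i hi hir => hg _ ?_) (fun h => absurd (mem_range.2 hr) h)
    rw [Nat.mul_add_mod, Nat.mod_eq_of_lt (mem_range.1 hi)]
    exact hir

section RootOfSixthCyclotomic

variable {R : Type*} [CommRing R] {z : R}

theorem pow_three_eq_neg_one_of_sq_sub_add_one (hz : z ^ 2 - z + 1 = 0) : z ^ 3 = -1 := by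
  linear_combination (z + 1) * hz

theorem one_sub_sq_sub_add_one (hz : z ^ 2 - z + 1 = 0) : (1 - z) ^ 2 - (1 - z) + 1 = 0 := by
  linear_combination hz

theorem one_add_sq_of_sq_sub_add_one (hz : z ^ 2 - z + 1 = 0) : (1 + z) ^ 2 = 3 * z := by
  linear_combination hz

theorem neg_one_pow_add_pow_add_one_sub_pow (hz : z ^ 2 - z + 1 = 0) (i : ℕ) :
    (-1) ^ i + z ^ i + (1 - z) ^ i = if i % 3 = 0 then 3 * (-1) ^ (i / 3) else 0 := by
  have hz3 := pow_three_eq_neg_one_of_sq_sub_add_one hz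
  have hz3' := pow_three_eq_neg_one_of_sq_sub_add_one (one_sub_sq_sub_add_one hz)
  have hmod := Nat.mod_lt i (show 3 > 0 by norm_num)
  conv_lhs => rw [← Nat.div_add_mod i 3]
  simp only [pow_add, pow_mul, hz3, hz3']
  interval_cases i % 3
  · simp only [pow_zero, mul_one, if_true]
    ring
  · simp only [pow_one, one_ne_zero, if_false]
    ring
  · simp only [OfNat.ofNat_ne_zero, if_false]
    linear_combination (2 * (-1) ^ (i / 3) : R) * hz

theorem three_mul_sum_neg_one_pow_mul_choose (hz : z ^ 2 - z + 1 = 0) (n : ℕ) :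
    3 * ∑ k ∈ range (n + 1), (-1 : R) ^ (k + 1) * (Nat.choose (3 * n + 2) (3 * k + 1) : R) =
      z ^ 2 * (1 + z) ^ (3 * n + 2) + (1 - z) ^ 2 * (1 + (1 - z)) ^ (3 * n + 2) := by
  have hexpand (x : R) : x ^ 2 * (1 + x) ^ (3 * n + 2) =
      ∑ j ∈ range (3 * (n + 1)), x ^ (j + 2) * (Nat.choose (3 * n + 2) j : R) := by
    rw [add_comm 1 x, add_pow, mul_sum, show 3 * (n + 1) = 3 * n + 2 + 1 by ring]
    exact sum_congr rfl fun j _ => by ring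
  have hminus : (-1 : R) ^ 2 * (1 + -1) ^ (3 * n + 2) = 0 := by simp
  rw [← zero_add (z ^ 2 * _), ← hminus, hexpand, hexpand, hexpand, ← sum_add_distrib,
    ← sum_add_distrib, mul_sum]
  simp only [← add_mul, neg_one_pow_add_pow_add_one_sub_pow hz]
  rw [sum_range_mul_eq_sum_of_eq_zero (by norm_num : 1 < 3)]
  · refine sum_congr rfl fun k _ => ?_
    rw [if_pos (by omega), show (3 * k + 1 + 2) / 3 = k + 1 by omega]
    ring
  · intro j hj
    rw [if_neg (by omega), zero_mul]

theorem sq_mul_one_add_pow_six_mul_add_two (hz : z ^ 2 - z + 1 = 0) (t : ℕ) :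
    z ^ 2 * (1 + z) ^ (6 * t + 2) = (-1) ^ (t + 1) * 3 ^ (3 * t + 1) := by
  calc z ^ 2 * (1 + z) ^ (6 * t + 2)
    _ = ((1 + z) ^ 2) ^ (3 * t + 1) * z ^ 2 := by rw [← pow_mul]; ring
    _ = 3 ^ (3 * t + 1) * (z ^ 3) ^ (t + 1) := by
      rw [one_add_sq_of_sq_sub_add_one hz, mul_pow, ← pow_mul]; ring
    _ = _ := by rw [pow_three_eq_neg_one_of_sq_sub_add_one hz]; ring

theorem sq_mul_one_add_pow_six_mul_add_five (hz : z ^ 2 - z + 1 = 0) (t : ℕ) :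
    z ^ 2 * (1 + z) ^ (6 * t + 5) = (-1) ^ (t + 1) * 3 ^ (3 * t + 2) * (2 * z - 1) := by
  calc z ^ 2 * (1 + z) ^ (6 * t + 5)
    _ = ((1 + z) ^ 2) ^ (3 * t + 2) * z ^ 2 * (1 + z) := by rw [← pow_mul]; ring
    _ = 3 ^ (3 * t + 2) * (z ^ 3) ^ (t + 1) * (z + z ^ 2) := by
      rw [one_add_sq_of_sq_sub_add_one hz, mul_pow, ← pow_mul]; ring
    _ = _ := by
      rw [pow_three_eq_neg_one_of_sq_sub_add_one hz]
      linear_combination (-1) ^ (t + 1) * 3 ^ (3 * t + 2) * hz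

end RootOfSixthCyclotomic

theorem exists_complex_sq_sub_add_one_eq_zero : ∃ z : ℂ, z ^ 2 - z + 1 = 0 := by
  obtain ⟨s, hs⟩ := IsAlgClosed.exists_eq_mul_self (-3 : ℂ)
  exact ⟨(1 + s) / 2, by linear_combination (-1 / 4 : ℂ) * hs⟩

/-- `∑_{k=0}^{n} (-1)^{k-1} C(3n+2,3k+1)` equals `0` for odd `n`
and `(-1)^{n/2-1}·2·3^{3n/2}` for even `n`. -/
theorem binom_sum_three_n_plus_two_shift (n : ℕ) (hn : 1 ≤ n) :
    (Odd n → (∑ k ∈ Finset.range (n + 1),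
        (-1 : ℤ) ^ (k + 1) * (Nat.choose (3 * n + 2) (3 * k + 1) : ℤ)) = 0) ∧
    (Even n → (∑ k ∈ Finset.range (n + 1),
        (-1 : ℤ) ^ (k + 1) * (Nat.choose (3 * n + 2) (3 * k + 1) : ℤ)) =
      (-1) ^ (n / 2 - 1) * 2 * 3 ^ (3 * n / 2)) := by
  obtain ⟨z, hz⟩ := exists_complex_sq_sub_add_one_eq_zero
  have hz' := one_sub_sq_sub_add_one hz
  have hfilter := three_mul_sum_neg_one_pow_mul_choose hz n
  refine ⟨fun ⟨t, ht⟩ => ?_, fun ⟨t, ht⟩ => ?_⟩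
  all_goals
    apply Int.cast_injective (α := ℂ)
    apply mul_left_cancel₀ (three_ne_zero (α := ℂ))
    push_cast
    rw [hfilter]
  · rw [show 3 * n + 2 = 6 * t + 5 by omega, sq_mul_one_add_pow_six_mul_add_five hz,
      sq_mul_one_add_pow_six_mul_add_five hz']
    ring
  · obtain ⟨u, rfl⟩ : ∃ u, t = u + 1 := ⟨t - 1, by omega⟩
    rw [show 3 * n + 2 = 6 * (u + 1) + 2 by omega, sq_mul_one_add_pow_six_mul_add_two hz,
      sq_mul_one_add_pow_six_mul_add_two hz', show n / 2 - 1 = u by omega,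
      show 3 * n / 2 = 3 * u + 3 by omega]
    ring
end

section
/- For all n ≥ 0, the Lehmer-Euler numbers satisfy W_{9n} ≡ (-1)^n (mod 27), W_{9n+3} ≡ (-1)^{n-1} (mod 27), and W_{9n+6} ≡ (-1)^{n-1}·8 (mod 27). -/
/-!
Let `u` be the 18-periodic sequence in `ZMod 27` that vanishes off multiples of 3 and takes the
claimed values at `9n, 9n + 3, 9n + 6`. By strong induction `W (3m) ≡ u (3m)`, provided that `u`
obeys the recursion of the `W (3m)`, i.e. `∑ j ≤ 3m, C(3m, j) u j = 0` for `m ≥ 1`. That sum is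
`((1 + E)^(3m) u) 0` for the shift `E`, and `(1 + E)^9` annihilates `u`: by periodicity this is a
finite check. The cases `m = 1, 2` are checked directly.
-/

open Finset

section BinomialSum

variable {M : Type*} [AddCommMonoid M]

/-- `binomialSum f N = (1 + E)^N f`, where `E` is the shift `f ↦ f (· + 1)`. -/
def binomialSum (f : ℕ → M) (N s : ℕ) : M :=
  ∑ j ∈ range (N + 1), N.choose j • f (s + j)

theorem binomialSum_succ (f : ℕ → M) (N s : ℕ) :
    binomialSum f (N + 1) s = binomialSum f N s + binomialSum f N (s + 1) := by
  simpa only [binomialSum, add_assoc, add_comm 1] using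
    sum_choose_succ_nsmul (fun j _ => f (s + j)) N

theorem binomialSum_eq_zero_of_le {f : ℕ → M} {N N' : ℕ} (h : ∀ s, binomialSum f N s = 0)
    (hN : N ≤ N') (s : ℕ) : binomialSum f N' s = 0 := by
  induction N', hN using Nat.le_induction generalizing s with
  | base => exact h s
  | succ N' _ ih => rw [binomialSum_succ, ih, ih, add_zero]

theorem Function.Periodic.binomialSum {f : ℕ → M} {p : ℕ} (hf : Function.Periodic f p)
    (N : ℕ) : Function.Periodic (binomialSum f N) p := fun s =>
  sum_congr rfl fun j _ => by rw [add_right_comm, hf]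

end BinomialSum

theorem sum_range_mul_add_one_eq_sum_mul {M : Type*} [AddCommMonoid M] {p : ℕ} (hp : 0 < p)
    {g : ℕ → M} (hg : ∀ j, ¬ p ∣ j → g j = 0) (m : ℕ) :
    ∑ j ∈ range (p * m + 1), g j = ∑ k ∈ range (m + 1), g (p * k) := by
  rw [← sum_image (f := g) fun _ _ _ _ h => Nat.eq_of_mul_eq_mul_left hp h]
  refine (sum_subset (fun j hj => ?_) fun j hj hj' => hg j ?_).symm
  · obtain ⟨k, hk, rfl⟩ := mem_image.1 hj
    simp only [mem_range] at hk ⊢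
    nlinarith
  · rintro ⟨k, rfl⟩
    refine hj' (mem_image.2 ⟨k, mem_range.2 ?_, rfl⟩)
    simp only [mem_range] at hj
    nlinarith

namespace LehmerEuler

def residue (j : ℕ) : ZMod 27 :=
  (-1) ^ (j / 9) * match j % 9 with
    | 0 => 1
    | 3 => -1
    | 6 => -8
    | _ => 0

theorem residue_periodic : Function.Periodic residue 18 := fun j => by
  simp only [residue, show (j + 18) / 9 = j / 9 + 2 by omega,
    show (j + 18) % 9 = j % 9 by omega, pow_add]
  norm_num

theorem residue_eq_zero_of_not_dvd {j : ℕ} (hj : ¬ 3 ∣ j) : residue j = 0 := by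
  have : j % 9 ≠ 0 ∧ j % 9 ≠ 3 ∧ j % 9 ≠ 6 := by omega
  unfold residue
  split <;> simp_all

theorem residue_nine_mul_add (n : ℕ) {r : ℕ} (hr : r < 9) :
    residue (9 * n + r) = (-1) ^ n * residue r := by
  simp [residue, Nat.mod_eq_of_lt hr, show (9 * n + r) / 9 = n by omega, Nat.div_eq_of_lt hr]

theorem binomialSum_residue_nine (s : ℕ) : binomialSum residue 9 s = 0 := by
  rw [← (residue_periodic.binomialSum 9).map_mod_nat]
  have : ∀ r < 18, binomialSum residue 9 r = 0 := by decide +kernel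
  exact this _ (Nat.mod_lt _ (by norm_num))

theorem residue_three_mul_eq_neg_sum {m : ℕ} (hm : 1 ≤ m) :
    residue (3 * m) =
      -∑ k ∈ range m, ((3 * m).choose (3 * k) : ZMod 27) * residue (3 * k) := by
  have hvanish : binomialSum residue (3 * m) 0 = 0 := by
    rcases (by omega : m = 1 ∨ m = 2 ∨ 3 ≤ m) with rfl | rfl | hm3
    · decide +kernel
    · decide +kernel
    · exact binomialSum_eq_zero_of_le binomialSum_residue_nine (by omega) 0
  simp only [binomialSum, zero_add] at hvanish
  rw [sum_range_mul_add_one_eq_sum_mul three_pos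
    (fun j hj => by rw [residue_eq_zero_of_not_dvd hj, smul_zero]), sum_range_succ,
    Nat.choose_self, one_smul] at hvanish
  simp only [nsmul_eq_mul] at hvanish
  exact eq_neg_of_add_eq_zero_right hvanish

theorem intCast_eq_residue (W : ℕ → ℤ) (hW0 : W 0 = 1)
    (hWrec : ∀ n : ℕ, 1 ≤ n →
      W (3 * n) = -∑ k ∈ range n, (Nat.choose (3 * n) (3 * k) : ℤ) * W (3 * k))
    (m : ℕ) : (W (3 * m) : ZMod 27) = residue (3 * m) := by
  induction m using Nat.strong_induction_on with
  | _ m ih =>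
    rcases Nat.eq_zero_or_pos m with rfl | hm
    · rw [hW0]; rfl
    · rw [hWrec m hm, residue_three_mul_eq_neg_sum hm]
      push_cast
      exact congrArg _ (sum_congr rfl fun k hk => by rw [ih k (mem_range.1 hk)])

end LehmerEuler

/-- `W (9n) ≡ (-1)^n`, `W (9n+3) ≡ (-1)^{n-1}`, and `W (9n+6) ≡ (-1)^{n-1}·8 (mod 27)`. -/
theorem lehmer_euler_mod_27 (W : ℕ → ℤ)
    (hW0 : W 0 = 1)
    (hWrec : ∀ n : ℕ, 1 ≤ n →
      W (3 * n) = -∑ k ∈ Finset.range n, (Nat.choose (3 * n) (3 * k) : ℤ) * W (3 * k)) :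
    ∀ n : ℕ, W (9 * n) ≡ (-1) ^ n [ZMOD 27] ∧
      W (9 * n + 3) ≡ (-1) ^ (n + 1) [ZMOD 27] ∧
      W (9 * n + 6) ≡ (-1) ^ (n + 1) * 8 [ZMOD 27] := by
  intro n
  have hW (t : ℕ) (ht : t < 3) :
      (W (9 * n + 3 * t) : ZMod 27) = (-1) ^ n * LehmerEuler.residue (3 * t) := by
    rw [show 9 * n + 3 * t = 3 * (3 * n + t) by ring, LehmerEuler.intCast_eq_residue W hW0 hWrec,
      ← LehmerEuler.residue_nine_mul_add n (by omega)]
    ring_nf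
  refine ⟨?_, ?_, ?_⟩ <;> apply (ZMod.intCast_eq_intCast_iff _ _ 27).mp <;> push_cast
  · simpa [LehmerEuler.residue] using hW 0 (by norm_num)
  · rw [hW 1 (by norm_num), pow_succ]; rfl
  · rw [hW 2 (by norm_num), pow_succ, mul_assoc]; rfl
end

section
/- The sequence (W_{3n} mod 9)_{n≥1} is periodic with period 2: W_{6m} ≡ 1 and W_{6m+3} ≡ 8 (mod 9) for all m ≥ 0. -/
open Finset

/-!
For a cube root of unity `ω ≠ 1`, the roots-of-unity filter gives
`3 ∑ₖ C(3n, 3k) (-1)ᵏ = (1 - ω)³ⁿ + (1 - ω²)³ⁿ = tⁿ + (-t)ⁿ` with `t = 3(ω² - ω)` and `t² = -27`.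
So this alternating sum is `0` for odd `n` and `-18 (-27)^(n/2 - 1)` for even `n ≥ 2`; in
particular it is divisible by `9` for `n ≥ 1`. Hence `(-1)ⁿ` satisfies the recursion of `W (3n)`
modulo `9`, and `W (3n) ≡ (-1)ⁿ (mod 9)` by strong induction.
-/

section CubeRootOfUnity

variable {R : Type*} [CommRing R] {ω : R}

theorem pow_three_eq_one_of_sq_add_self_add_one (hω : ω ^ 2 + ω + 1 = 0) : ω ^ 3 = 1 := by
  linear_combination (ω - 1) * hω

theorem one_add_pow_add_pow_two_mul (hω : ω ^ 2 + ω + 1 = 0) (j : ℕ) :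
    1 + ω ^ j + ω ^ (2 * j) = if 3 ∣ j then 3 else 0 := by
  have hω3 := pow_three_eq_one_of_sq_add_self_add_one hω
  obtain ⟨q, r, hr, rfl⟩ : ∃ q r, r < 3 ∧ j = 3 * q + r :=
    ⟨j / 3, j % 3, j.mod_lt three_pos, (Nat.div_add_mod j 3).symm⟩
  have hpow (i s : ℕ) : ω ^ (3 * i + s) = ω ^ s := by
    rw [pow_add, pow_mul, hω3, one_pow, one_mul]
  rw [show 2 * (3 * q + r) = 3 * (2 * q) + 2 * r by ring, hpow, hpow]
  simp only [Nat.dvd_add_right (dvd_mul_right 3 q)]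
  interval_cases r
  · norm_num
  · norm_num
    linear_combination hω
  · norm_num
    linear_combination hω + ω * hω3

theorem sum_range_ite_three_dvd {M : Type*} [AddCommMonoid M] (f : ℕ → M) (n : ℕ) :
    ∑ j ∈ range (3 * n + 1), (if 3 ∣ j then f j else 0) = ∑ k ∈ range (n + 1), f (3 * k) := by
  induction n with
  | zero => simp
  | succ n ih =>
    rw [show 3 * (n + 1) + 1 = 3 * n + 1 + 1 + 1 + 1 by ring, sum_range_succ,
      sum_range_succ, sum_range_succ, ih, if_neg (by omega), if_neg (by omega),
      if_pos (by omega), show 3 * n + 1 + 1 + 1 = 3 * (n + 1) by ring, sum_range_succ _ (n + 1)]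
    simp

theorem cube_roots_of_unity_filter (hω : ω ^ 2 + ω + 1 = 0) (x : R) (n : ℕ) :
    (x + 1) ^ (3 * n) + (ω * x + 1) ^ (3 * n) + (ω ^ 2 * x + 1) ^ (3 * n) =
      3 * ∑ k ∈ range (n + 1), x ^ (3 * k) * (3 * n).choose (3 * k) := by
  simp only [add_pow, one_pow, mul_one, ← sum_add_distrib, mul_sum]
  rw [← sum_range_ite_three_dvd (fun j => 3 * (x ^ j * ((3 * n).choose j : R)))]
  refine sum_congr rfl fun j _ => ?_
  have hfilter := one_add_pow_add_pow_two_mul hω j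
  split_ifs at hfilter ⊢ <;> linear_combination x ^ j * ((3 * n).choose j : R) * hfilter

theorem three_mul_sum_choose_mul_neg_one_pow (hω : ω ^ 2 + ω + 1 = 0) {n : ℕ} (hn : n ≠ 0) :
    3 * ∑ k ∈ range (n + 1), ((3 * n).choose (3 * k) : R) * (-1) ^ k =
      (3 * (ω ^ 2 - ω)) ^ n + (-(3 * (ω ^ 2 - ω))) ^ n := by
  have hω3 := pow_three_eq_one_of_sq_add_self_add_one hω
  have h1 : (ω * -1 + 1) ^ 3 = 3 * (ω ^ 2 - ω) := by
    linear_combination (-1 : R) * hω3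
  have h2 : (ω ^ 2 * -1 + 1) ^ 3 = -(3 * (ω ^ 2 - ω)) := by
    linear_combination (3 * ω - ω ^ 3 - 1) * hω3
  have hfilter := cube_roots_of_unity_filter hω (-1) n
  rw [neg_add_cancel, zero_pow (by omega), zero_add, pow_mul, pow_mul, h1, h2] at hfilter
  rw [hfilter]
  congr 1
  refine sum_congr rfl fun k _ => ?_
  rw [pow_mul, mul_comm]
  norm_num

end CubeRootOfUnity

theorem exists_sq_add_self_add_one_eq_zero : ∃ ω : ℂ, ω ^ 2 + ω + 1 = 0 := by
  have h := (Complex.isPrimitiveRoot_exp 3 three_ne_zero).geom_sum_eq_zero (by norm_num)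
  simp only [sum_range_succ, sum_range_zero] at h
  exact ⟨_, by linear_combination h⟩

theorem three_mul_sum_choose_three_mul_mul_neg_one_pow {n : ℕ} (hn : n ≠ 0) :
    3 * ∑ k ∈ range (n + 1), ((3 * n).choose (3 * k) : ℤ) * (-1) ^ k =
      if Even n then 2 * (-27) ^ (n / 2) else 0 := by
  obtain ⟨ω, hω⟩ := exists_sq_add_self_add_one_eq_zero
  have ht : (3 * (ω ^ 2 - ω)) ^ 2 = -27 := by
    linear_combination 9 * (ω ^ 2 - 3 * ω + 3) * hω
  apply Int.cast_injective (α := ℂ)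
  push_cast
  rw [three_mul_sum_choose_mul_neg_one_pow hω hn]
  split_ifs with heven
  · obtain ⟨j, rfl⟩ := heven
    rw [← two_mul, Nat.mul_div_cancel_left j two_pos, pow_mul, pow_mul, neg_sq, ht]
    ring
  · rw [(Nat.not_even_iff_odd.mp heven).neg_pow, add_neg_cancel]

theorem nine_dvd_sum_choose_three_mul_mul_neg_one_pow {n : ℕ} (hn : n ≠ 0) :
    (9 : ℤ) ∣ ∑ k ∈ range (n + 1), ((3 * n).choose (3 * k) : ℤ) * (-1) ^ k := by
  rw [← mul_dvd_mul_iff_left (three_ne_zero (α := ℤ)),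
    three_mul_sum_choose_three_mul_mul_neg_one_pow hn]
  split_ifs with heven
  · have hhalf : n / 2 ≠ 0 := by
      obtain ⟨j, rfl⟩ := heven
      omega
    exact (dvd_pow (dvd_neg.mpr dvd_rfl) hhalf).mul_left 2
  · exact dvd_zero _

theorem intCast_zmod_nine_eq_neg_one_pow (W : ℕ → ℤ) (hW0 : W 0 = 1)
    (hWrec : ∀ n : ℕ, 1 ≤ n →
      W (3 * n) = -∑ k ∈ range n, (Nat.choose (3 * n) (3 * k) : ℤ) * W (3 * k))
    (n : ℕ) : (W (3 * n) : ZMod 9) = (-1) ^ n := by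
  induction n using Nat.strong_induction_on with
  | _ n ih =>
  obtain rfl | hn := Nat.eq_zero_or_pos n
  · simp [hW0]
  have hsum := (ZMod.intCast_zmod_eq_zero_iff_dvd _ 9).mpr
    (nine_dvd_sum_choose_three_mul_mul_neg_one_pow hn.ne')
  push_cast at hsum
  rw [sum_range_succ, Nat.choose_self, Nat.cast_one, one_mul] at hsum
  rw [hWrec n hn]
  push_cast
  rw [sum_congr rfl fun k hk => by rw [ih k (mem_range.mp hk)]]
  linear_combination -hsum

/-- The sequence `W (3n) mod 9` is periodic with period 2:
`W (6m) ≡ 1` and `W (6m+3) ≡ 8 (mod 9)` for all `m ≥ 0`. -/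
theorem lehmer_euler_mod_9_periodic (W : ℕ → ℤ)
    (hW0 : W 0 = 1)
    (hWrec : ∀ n : ℕ, 1 ≤ n →
      W (3 * n) = -∑ k ∈ Finset.range n, (Nat.choose (3 * n) (3 * k) : ℤ) * W (3 * k)) :
    ∀ m : ℕ, W (6 * m) ≡ 1 [ZMOD 9] ∧ W (6 * m + 3) ≡ 8 [ZMOD 9] := by
  intro m
  have hW := intCast_zmod_nine_eq_neg_one_pow W hW0 hWrec
  refine ⟨(ZMod.intCast_eq_intCast_iff _ _ 9).mp ?_, (ZMod.intCast_eq_intCast_iff _ _ 9).mp ?_⟩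
  · rw [show 6 * m = 3 * (2 * m) by ring, hW, pow_mul]
    norm_num
  · rw [show 6 * m + 3 = 3 * (2 * m + 1) by ring, hW, pow_succ, pow_mul]
    norm_num
    rfl
end

section
/- For n ≥ m ≥ 1, W_{3n,≤m} = (3n)! · ∑_{k=1}^{n} (-1)^k ∑_{i_1+⋯+i_k=n, 1 ≤ i_j ≤ m} 1/((3i_1)!⋯(3i_k)!). -/
/-!
With `g = ∑_{l=1}^m X^l / (3l)!`, the series inverted in the definition of `W` is `1 + g(X³)`, so
the exponential generating function of `W` is `(1 + g)⁻¹` evaluated at `X³`. In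
`(1 + g)⁻¹ = ∑_k (-g)^k` only the terms `k ≤ n` reach the coefficient of `X^n`, since `g` has no
constant term, and the coefficient of `X^n` in `g^k` is a sum over the compositions of `n` into
`k` parts between `1` and `m`.
-/

open Finset PowerSeries

namespace PowerSeries

variable {R : Type*} [CommRing R]

theorem coeff_pow_eq_sum_antidiagonalTuple (φ : R⟦X⟧) (k n : ℕ) :
    coeff n (φ ^ k) = ∑ i ∈ Nat.antidiagonalTuple k n, ∏ j, coeff (i j) φ := by
  rw [← piAntidiag_univ_fin_eq_antidiagonalTuple, ← Fin.prod_const, coeff_prod, finsuppAntidiag,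
    sum_map]
  exact sum_attach (univ.piAntidiag n) (fun i => ∏ j, coeff (i j) φ)

theorem coeff_pow_mk_ite (p : ℕ → Prop) [DecidablePred p] (a : ℕ → R) (k n : ℕ) :
    coeff n ((mk fun l => if p l then a l else 0) ^ k) =
      ∑ i ∈ (Nat.antidiagonalTuple k n).filter (fun i => ∀ j, p (i j)), ∏ j, a (i j) := by
  simp only [coeff_pow_eq_sum_antidiagonalTuple, coeff_mk, prod_ite_zero, mem_univ, true_imp_iff,
    sum_filter]

theorem coeff_eq_sum_Icc_of_mul_one_add_eq_one {φ ψ : R⟦X⟧} (hψ : constantCoeff ψ = 0)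
    (hφ : φ * (1 + ψ) = 1) {n : ℕ} (hn : n ≠ 0) :
    coeff n φ = ∑ k ∈ Icc 1 n, (-1) ^ k * coeff n (ψ ^ k) := by
  have hgeom : φ = ∑ k ∈ range (n + 1), (-ψ) ^ k + φ * (-ψ) ^ (n + 1) := by
    linear_combination φ * geom_sum_mul (-ψ) (n + 1) + (∑ k ∈ range (n + 1), (-ψ) ^ k) * hφ
  have htail : coeff n (φ * (-ψ) ^ (n + 1)) = 0 := by
    have : X ^ (n + 1) ∣ φ * (-ψ) ^ (n + 1) :=
      (pow_dvd_pow_of_dvd (X_dvd_iff.mpr (by simp [hψ])) _).mul_left φ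
    exact X_pow_dvd_iff.mp this n n.lt_succ_self
  rw [hgeom, map_add, htail, add_zero, map_sum, range_eq_Ico,
    sum_eq_sum_Ico_succ_bot (show 0 < n + 1 by omega), zero_add, Ico_add_one_right_eq_Icc,
    pow_zero, coeff_one, if_neg hn, zero_add]
  refine sum_congr rfl fun k _ => ?_
  rw [neg_pow, ← map_one (C (R := R)), ← map_neg, ← map_pow, coeff_C_mul]

theorem eq_expand_of_mul_expand_eq_one {p : ℕ} (hp : p ≠ 0) {φ ψ χ : R⟦X⟧}
    (hφ : φ * expand p hp χ = 1) (hψ : ψ * χ = 1) : φ = expand p hp ψ := by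
  calc φ = φ * expand p hp (ψ * χ) := by rw [hψ, map_one, mul_one]
    _ = expand p hp ψ * (φ * expand p hp χ) := by rw [map_mul]; ring
    _ = expand p hp ψ := by rw [hφ, mul_one]

end PowerSeries

/-- Explicit formula for the restricted incomplete Lehmer-Euler numbers: for `n ≥ m ≥ 1`,
`W_{3n,≤m} = (3n)! ∑_{k=1}^n (-1)^k ∑_{i₁+⋯+i_k=n, 1 ≤ i_j ≤ m} 1/((3i₁)!⋯(3i_k)!)`. -/
theorem incomplete_lehmer_euler_le_explicit (m : ℕ) (hm : 1 ≤ m) (W : ℕ → ℚ)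
    (hW : (PowerSeries.mk fun n => W n / (n.factorial : ℚ)) *
      (PowerSeries.mk fun j => if j = 0 then (1 : ℚ)
        else if 3 ∣ j ∧ j ≤ 3 * m then (1 : ℚ) / (j.factorial : ℚ) else 0) = 1)
    (n : ℕ) (hn : m ≤ n) :
    W (3 * n) = ((3 * n).factorial : ℚ) *
      ∑ k ∈ Finset.Icc 1 n, (-1 : ℚ) ^ k *
        ∑ i ∈ (Finset.Nat.antidiagonalTuple k n).filter
            (fun i => ∀ j, 1 ≤ i j ∧ i j ≤ m),
          ∏ j, (1 : ℚ) / ((3 * i j).factorial : ℚ) := by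
  set g : ℚ⟦X⟧ := mk fun l => if 1 ≤ l ∧ l ≤ m then (1 : ℚ) / (3 * l).factorial else 0
  have hseries : (mk fun j => if j = 0 then (1 : ℚ)
      else if 3 ∣ j ∧ j ≤ 3 * m then (1 : ℚ) / (j.factorial : ℚ) else 0) =
        expand 3 three_ne_zero (1 + g) := by
    ext j
    rw [coeff_expand, coeff_mk]
    by_cases h3 : 3 ∣ j
    · obtain ⟨l, rfl⟩ := h3
      rcases Nat.eq_zero_or_pos l with rfl | hl
      · simp [g]
      · simp [g, coeff_one, hl.ne', Nat.one_le_iff_ne_zero]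
    · simp [h3, show j ≠ 0 by rintro rfl; simp at h3]
  have hg0 : constantCoeff g = 0 := by simp [g]
  have hinv : (1 + g)⁻¹ * (1 + g) = 1 := PowerSeries.inv_mul_cancel _ (by simp [hg0])
  rw [hseries] at hW
  have hcoeff := congrArg (coeff (3 * n)) (eq_expand_of_mul_expand_eq_one three_ne_zero hW hinv)
  rw [coeff_mk, coeff_expand_mul, coeff_eq_sum_Icc_of_mul_one_add_eq_one hg0 hinv (by omega),
    div_eq_iff (by positivity)] at hcoeff
  rw [hcoeff, mul_comm]
  simp only [g, coeff_pow_mk_ite]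
end

section
/- For all nonnegative integers n and k, the Euler numbers satisfy E_{2n+2k} = ∑_{j=0}^{n} ((-1)^{j-k} (2j)! Δ(j,k) / 2^j) · T(2n, 2j), where Δ(x,k) is the polynomial sequence defined by Δ(x,0) = 1 and Δ(x,k+1) = (x+1)(2x+1)Δ(x+1,k) - x²Δ(x,k), and T(n,k) are the central factorial numbers of the second kind. -/
/-!
Induct on `k`, moving from row `2n + 2` of the central factorial triangle to row `2n`: the
recurrence for `T` turns a weighted sum over row `2n + 2` into one over row `2n` with weights
`c (j + 1) + j² c j`, and for the weights of the theorem this is exactly the recurrence defining `Δ`.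
-/

open Finset

theorem sum_mul_central_row_succ {R : Type*} [CommSemiring R] (T : ℕ → ℕ → R) (n : ℕ)
    (hrec : ∀ j : ℕ, T (2 * (n + 1)) (2 * (j + 1)) =
      T (2 * n) (2 * j) + ((j : R) + 1) ^ 2 * T (2 * n) (2 * (j + 1)))
    (hcol : T (2 * (n + 1)) 0 = 0) (htop : T (2 * n) (2 * (n + 1)) = 0) (c : ℕ → R) :
    ∑ j ∈ range (n + 2), c j * T (2 * (n + 1)) (2 * j) =
      ∑ j ∈ range (n + 1), (c (j + 1) + (j : R) ^ 2 * c j) * T (2 * n) (2 * j) := by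
  have hshift : ∑ j ∈ range (n + 1), c (j + 1) * (((j : R) + 1) ^ 2 * T (2 * n) (2 * (j + 1))) =
      ∑ j ∈ range (n + 1), (j : R) ^ 2 * c j * T (2 * n) (2 * j) := by
    have h := sum_range_succ' (fun j => (j : R) ^ 2 * c j * T (2 * n) (2 * j)) (n + 1)
    rw [sum_range_succ, htop] at h
    simpa [mul_comm, mul_left_comm, mul_assoc] using h.symm
  rw [sum_range_succ', mul_zero, hcol, mul_zero, add_zero,
    sum_congr rfl fun j _ => by rw [hrec, mul_add], sum_add_distrib, hshift, ← sum_add_distrib]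
  simp only [add_mul]

def eulerWeight (Δ : ℚ → ℕ → ℚ) (k j : ℕ) : ℚ :=
  (-1) ^ (j + k) * ((2 * j).factorial : ℚ) * Δ (j : ℚ) k / 2 ^ j

theorem eulerWeight_succ_add_mul {Δ : ℚ → ℕ → ℚ}
    (hΔ : ∀ (x : ℚ) (k : ℕ), Δ x (k + 1) = (x + 1) * (2 * x + 1) * Δ (x + 1) k - x ^ 2 * Δ x k)
    (k j : ℕ) :
    eulerWeight Δ k (j + 1) + (j : ℚ) ^ 2 * eulerWeight Δ k j = eulerWeight Δ (k + 1) j := by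
  have hfac : ((2 * (j + 1)).factorial : ℚ) = (2 * j + 2) * (2 * j + 1) * (2 * j).factorial := by
    rw [mul_add, mul_one, Nat.factorial_succ, Nat.factorial_succ]
    push_cast
    ring
  simp only [eulerWeight, hfac, hΔ, Nat.cast_succ]
  field_simp
  ring

theorem euler_central_factorial_second_general (E : ℕ → ℚ)
    (Δ : ℚ → ℕ → ℚ)
    (hΔ0 : ∀ x : ℚ, Δ x 0 = 1)
    (hΔ : ∀ (x : ℚ) (k : ℕ),
      Δ x (k + 1) = (x + 1) * (2 * x + 1) * Δ (x + 1) k - x ^ 2 * Δ x k)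
    (T : ℕ → ℕ → ℚ)
    (hTrec : ∀ n k : ℕ, T (n + 2) (k + 2) = T n k + ((k : ℚ) + 2) ^ 2 / 4 * T n (k + 2))
    (hT0 : ∀ n : ℕ, 0 < n → T n 0 = 0)
    (hTzero : ∀ n k : ℕ, (Odd (n + k) ∨ n < k) → T n k = 0)
    (hbase : ∀ n : ℕ, E (2 * n) =
      ∑ j ∈ Finset.range (n + 1),
        (-1 : ℚ) ^ j * ((2 * j).factorial : ℚ) / 2 ^ j * T (2 * n) (2 * j)) :
    ∀ n k : ℕ, E (2 * n + 2 * k) =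
      ∑ j ∈ Finset.range (n + 1),
        (-1 : ℚ) ^ (j + k) * ((2 * j).factorial : ℚ) * Δ (j : ℚ) k / 2 ^ j *
          T (2 * n) (2 * j) := by
  have hrec (n j : ℕ) : T (2 * (n + 1)) (2 * (j + 1)) =
      T (2 * n) (2 * j) + ((j : ℚ) + 1) ^ 2 * T (2 * n) (2 * (j + 1)) := by
    rw [mul_add, mul_add, mul_one, hTrec]
    push_cast
    ring
  intro n k
  induction k generalizing n with
  | zero => simpa [hΔ0] using hbase n
  | succ k ih =>
    calc E (2 * n + 2 * (k + 1))
        = ∑ j ∈ range (n + 2), eulerWeight Δ k j * T (2 * (n + 1)) (2 * j) := by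
          rw [show 2 * n + 2 * (k + 1) = 2 * (n + 1) + 2 * k by ring]
          exact ih (n + 1)
      _ = ∑ j ∈ range (n + 1), eulerWeight Δ (k + 1) j * T (2 * n) (2 * j) := by
          rw [sum_mul_central_row_succ T n (hrec n) (hT0 _ (by omega))
            (hTzero _ _ (.inr (by omega)))]
          simp only [eulerWeight_succ_add_mul hΔ]

/-- `E_{2n+2k} = ∑_{j=0}^n ((-1)^{j-k} (2j)! Δ(j,k)/2^j) T(2n,2j)`, where `Δ` is defined by
`Δ(x,0)=1`, `Δ(x,k+1)=(x+1)(2x+1)Δ(x+1,k) - x²Δ(x,k)` and `T` are the central factorial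
numbers of the second kind. -/
theorem euler_central_factorial_second (E : ℕ → ℚ)
    (hE : (PowerSeries.mk fun n => E n / (n.factorial : ℚ)) *
      (PowerSeries.mk fun n => ((1 : ℚ) + (-1) ^ n) / (2 * (n.factorial : ℚ))) = 1)
    (Δ : ℚ → ℕ → ℚ)
    (hΔ0 : ∀ x : ℚ, Δ x 0 = 1)
    (hΔ : ∀ (x : ℚ) (k : ℕ),
      Δ x (k + 1) = (x + 1) * (2 * x + 1) * Δ (x + 1) k - x ^ 2 * Δ x k)
    (T : ℕ → ℕ → ℚ)
    (hTrec : ∀ n k : ℕ, T (n + 2) (k + 2) = T n k + ((k : ℚ) + 2) ^ 2 / 4 * T n (k + 2))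
    (hT0 : ∀ n : ℕ, 0 < n → T n 0 = 0)
    (hTdiag : ∀ n : ℕ, T n n = 1)
    (hTzero : ∀ n k : ℕ, (Odd (n + k) ∨ n < k) → T n k = 0)
    (hbase : ∀ n : ℕ, E (2 * n) =
      ∑ j ∈ Finset.range (n + 1),
        (-1 : ℚ) ^ j * ((2 * j).factorial : ℚ) / 2 ^ j * T (2 * n) (2 * j)) :
    ∀ n k : ℕ, E (2 * n + 2 * k) =
      ∑ j ∈ Finset.range (n + 1),
        (-1 : ℚ) ^ (j + k) * ((2 * j).factorial : ℚ) * Δ (j : ℚ) k / 2 ^ j *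
          T (2 * n) (2 * j) :=
  euler_central_factorial_second_general E Δ hΔ0 hΔ T hTrec hT0 hTzero hbase
end

section
/- For every nonnegative integer k, the Euler number E_{2k} equals (-1)^k · Δ(0,k), where Δ(x,k) is defined by Δ(x,0)=1 and Δ(x,k+1) = (x+1)(2x+1)Δ(x+1,k) - x²Δ(x,k). -/
/-!
Put `F_n(t) = cos t / (1 - sin t)^(n+1)` (`deltaSeries K n`). Since
`cos² t = (1 - sin t)(1 + sin t)`, one finds
`F_n' = (2n+1)(1 - sin t)^(-(n+1)) - n (1 - sin t)^(-n)`, hence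
`F_n'' = (n+1)(2n+1) F_(n+1) - n² F_n`. Comparing coefficients of `t^(2k)`, the numbers
`(2k)! [t^(2k)] F_n` satisfy the recursion of `Δ(n, k)` with the same initial values.
The even part of `F_0 = (1 + sin t) / cos t` is `sec t = 1 / cosh (i t)`, whose coefficient of
`t^(2k)` is `(-1)^k E_(2k) / (2k)!`.
-/

open PowerSeries

namespace PowerSeries

variable {K : Type*} [Field K] [Algebra ℚ K]

theorem coeff_sin (n : ℕ) :
    coeff n (sin K) = if Even n then 0 else algebraMap ℚ K ((-1) ^ (n / 2) / n.factorial) :=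
  coeff_mk _ _

theorem coeff_cos (n : ℕ) :
    coeff n (cos K) = if Even n then algebraMap ℚ K ((-1) ^ (n / 2) / n.factorial) else 0 :=
  coeff_mk _ _

@[simp] theorem constantCoeff_sin : constantCoeff (sin K) = 0 := by
  simp [← coeff_zero_eq_constantCoeff_apply, coeff_sin]

@[simp] theorem constantCoeff_cos : constantCoeff (cos K) = 1 := by
  simp [← coeff_zero_eq_constantCoeff_apply, coeff_cos]

theorem derivative_sin : d⁄dX K (sin K) = cos K := by
  ext n
  rw [coeff_derivative, coeff_sin, coeff_cos, ← Nat.cast_succ, ← map_natCast (algebraMap ℚ K)]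
  obtain ⟨m, rfl | rfl⟩ := Nat.even_or_odd' n
  · rw [if_neg (by simp [parity_simps]), if_pos (even_two_mul m), ← map_mul,
      show (2 * m + 1) / 2 = 2 * m / 2 by omega, Nat.factorial_succ]
    congr 1
    push_cast
    field_simp
  · rw [if_pos (by simp [parity_simps]), if_neg (by simp [parity_simps]), zero_mul]

theorem derivative_cos : d⁄dX K (cos K) = -sin K := by
  ext n
  rw [coeff_derivative, map_neg, coeff_cos, coeff_sin, ← Nat.cast_succ,
    ← map_natCast (algebraMap ℚ K)]
  obtain ⟨m, rfl | rfl⟩ := Nat.even_or_odd' n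
  · rw [if_neg (by simp [parity_simps]), if_pos (even_two_mul m), zero_mul, neg_zero]
  · rw [if_pos (by simp [parity_simps]), if_neg (by simp [parity_simps]), ← map_mul, ← map_neg,
      show (2 * m + 1 + 1) / 2 = (2 * m + 1) / 2 + 1 by omega, Nat.factorial_succ]
    congr 1
    push_cast
    field_simp
    ring

theorem cos_sq_add_sin_sq : cos K ^ 2 + sin K ^ 2 = 1 := by
  have := algebraRat.charZero K
  refine derivative.ext ?_ (by simp)
  simp only [map_add, derivative_pow, derivative_sin, derivative_cos, Derivation.map_one_eq_zero]
  ring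

theorem rescale_neg_one_sin : rescale (-1 : K) (sin K) = -sin K := by
  ext n
  rw [coeff_rescale, map_neg, coeff_sin]
  obtain ⟨m, rfl | rfl⟩ := Nat.even_or_odd' n <;> simp [pow_succ, pow_mul, parity_simps]

theorem rescale_neg_one_cos : rescale (-1 : K) (cos K) = cos K := by
  ext n
  rw [coeff_rescale, coeff_cos]
  obtain ⟨m, rfl | rfl⟩ := Nat.even_or_odd' n <;> simp [pow_succ, pow_mul, parity_simps]

variable (K) in
noncomputable def sec : K⟦X⟧ := (cos K)⁻¹

theorem cos_mul_sec : cos K * sec K = 1 :=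
  PowerSeries.mul_inv_cancel _ (by simp)

end PowerSeries

section DeltaSeries

variable (K : Type*) [Field K] [Algebra ℚ K]

noncomputable def deltaSeries (n : ℕ) : K⟦X⟧ := cos K * (1 - sin K)⁻¹ ^ (n + 1)

noncomputable def deltaCoeff (n k : ℕ) : K :=
  (2 * k).factorial * coeff (2 * k) (deltaSeries K n)

variable {K}

theorem one_sub_sin_mul_inv : (1 - sin K) * (1 - sin K)⁻¹ = 1 :=
  PowerSeries.mul_inv_cancel _ (by simp)

theorem derivative_inv_one_sub_sin_pow (m : ℕ) :
    d⁄dX K ((1 - sin K)⁻¹ ^ m) = m * cos K * (1 - sin K)⁻¹ ^ (m + 1) := by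
  cases m with
  | zero => simp
  | succ m =>
    simp only [derivative_pow, derivative_inv', map_sub, Derivation.map_one_eq_zero,
      derivative_sin, Nat.add_sub_cancel]
    ring

theorem derivative_deltaSeries (n : ℕ) :
    d⁄dX K (deltaSeries K n) =
      (2 * n + 1) * (1 - sin K)⁻¹ ^ (n + 1) - n * (1 - sin K)⁻¹ ^ n := by
  simp only [deltaSeries, Derivation.leibniz, derivative_inv_one_sub_sin_pow, derivative_cos,
    smul_eq_mul]
  push_cast
  linear_combination (n + 1 : K⟦X⟧) * (1 - sin K)⁻¹ ^ (n + 2) * cos_sq_add_sin_sq (K := K)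
    + ((n + 1) * (1 + sin K) * (1 - sin K)⁻¹ ^ (n + 1) - n * (1 - sin K)⁻¹ ^ n)
      * one_sub_sin_mul_inv (K := K)

theorem derivative_derivative_deltaSeries (n : ℕ) :
    d⁄dX K (d⁄dX K (deltaSeries K n)) =
      C ((n + 1) * (2 * n + 1) : K) * deltaSeries K (n + 1) -
        C ((n : K) ^ 2) * deltaSeries K n := by
  rw [derivative_deltaSeries]
  simp only [deltaSeries, map_sub, Derivation.leibniz,
    derivative_inv_one_sub_sin_pow, smul_eq_mul, map_mul, map_add, map_natCast, map_ofNat,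
    map_one, map_pow]
  have h2 : d⁄dX K (2 : K⟦X⟧) = 0 := by
    rw [← map_ofNat C 2, derivative_C]
  have hn : d⁄dX K (n : K⟦X⟧) = 0 := by
    rw [← map_natCast C n, derivative_C]
  simp only [h2, hn, Derivation.map_one_eq_zero]
  push_cast
  ring

theorem deltaCoeff_zero_right (n : ℕ) : deltaCoeff K n 0 = 1 := by
  simp [deltaCoeff, deltaSeries]

theorem deltaCoeff_succ (n k : ℕ) :
    deltaCoeff K n (k + 1) =
      (n + 1) * (2 * n + 1) * deltaCoeff K (n + 1) k - n ^ 2 * deltaCoeff K n k := by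
  have h := congrArg (coeff (2 * k)) (derivative_derivative_deltaSeries (K := K) n)
  rw [coeff_derivative, coeff_derivative, map_sub, coeff_C_mul, coeff_C_mul] at h
  have hfac : ((2 * (k + 1)).factorial : K) =
      (2 * k).factorial * (2 * k + 1) * (2 * k + 1 + 1) := by
    rw [show 2 * (k + 1) = 2 * k + 1 + 1 by ring, Nat.factorial_succ, Nat.factorial_succ]
    push_cast
    ring
  rw [show 2 * k + 1 + 1 = 2 * (k + 1) by ring] at h
  push_cast at h
  simp only [deltaCoeff, hfac]
  linear_combination ((2 * k).factorial : K) * h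

theorem eq_deltaCoeff_of_rec (Δ : K → ℕ → K) (hΔ0 : ∀ x, Δ x 0 = 1)
    (hΔ : ∀ x k, Δ x (k + 1) = (x + 1) * (2 * x + 1) * Δ (x + 1) k - x ^ 2 * Δ x k)
    (n k : ℕ) : Δ n k = deltaCoeff K n k := by
  induction k generalizing n with
  | zero => rw [hΔ0, deltaCoeff_zero_right]
  | succ k ih => rw [hΔ, deltaCoeff_succ, ← ih, ← ih, Nat.cast_succ]

theorem deltaSeries_zero_add_rescale_neg_one :
    deltaSeries K 0 + rescale (-1) (deltaSeries K 0) = 2 * sec K := by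
  have h := congrArg (rescale (-1 : K)) (one_sub_sin_mul_inv (K := K))
  rw [map_mul, map_sub, map_one, rescale_neg_one_sin, sub_neg_eq_add] at h
  rw [deltaSeries, map_mul, map_pow, rescale_neg_one_cos]
  set z' := rescale (-1 : K) (1 - sin K)⁻¹
  linear_combination -(cos K * (1 - sin K)⁻¹ + cos K * z') * cos_mul_sec (K := K)
    + sec K * ((1 - sin K)⁻¹ + z') * cos_sq_add_sin_sq (K := K)
    + sec K * (1 + sin K) * one_sub_sin_mul_inv (K := K) + sec K * (1 - sin K) * h

theorem coeff_two_mul_deltaSeries_zero (k : ℕ) :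
    coeff (2 * k) (deltaSeries K 0) = coeff (2 * k) (sec K) := by
  have := algebraRat.charZero K
  have h := congrArg (coeff (2 * k)) (deltaSeries_zero_add_rescale_neg_one (K := K))
  rw [map_add, coeff_rescale, pow_mul, neg_one_sq, one_pow, one_mul, ← two_mul,
    ← map_ofNat C 2, coeff_C_mul] at h
  exact mul_left_cancel₀ two_ne_zero h

end DeltaSeries

theorem rescale_I_map_cosh :
    rescale Complex.I (map (algebraMap ℚ ℂ)
      (mk fun n => ((1 : ℚ) + (-1) ^ n) / (2 * (n.factorial : ℚ)))) =
      map (algebraMap ℚ ℂ) (cos ℚ) := by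
  ext n
  rw [coeff_rescale, coeff_map, coeff_map, coeff_mk, coeff_cos, Algebra.algebraMap_self,
    RingHom.id_apply]
  obtain ⟨m, rfl | rfl⟩ := Nat.even_or_odd' n
  · simp [pow_mul]
    ring
  · simp [pow_succ, pow_mul, parity_simps]

theorem euler_two_mul_eq_coeff_sec (E : ℕ → ℚ)
    (hE : (mk fun n => E n / (n.factorial : ℚ)) *
      (mk fun n => ((1 : ℚ) + (-1) ^ n) / (2 * (n.factorial : ℚ))) = 1) (k : ℕ) :
    E (2 * k) = (-1) ^ k * (2 * k).factorial * coeff (2 * k) (sec ℚ) := by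
  set φ : ℚ⟦X⟧ →+* ℂ⟦X⟧ := (rescale Complex.I).comp (map (algebraMap ℚ ℂ))
  have hmul :
      φ (mk fun n => E n / (n.factorial : ℚ)) * map (algebraMap ℚ ℂ) (cos ℚ) = 1 := by
    rw [← rescale_I_map_cosh, ← map_one φ, ← hE, map_mul]
    rfl
  have hsec : φ (mk fun n => E n / (n.factorial : ℚ)) = map (algebraMap ℚ ℂ) (sec ℚ) :=
    left_inv_eq_right_inv hmul (by rw [← map_mul, cos_mul_sec, map_one])
  have hcoeff := congrArg (coeff (2 * k)) hsec
  simp only [φ, RingHom.comp_apply, coeff_rescale, coeff_map, coeff_mk, pow_mul,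
    Complex.I_sq] at hcoeff
  rw [← map_one (algebraMap ℚ ℂ), ← map_neg, ← map_pow, ← map_mul] at hcoeff
  rw [← (algebraMap ℚ ℂ).injective hcoeff]
  field_simp
  rw [← pow_mul, pow_mul', neg_one_sq, one_pow, mul_one]

/-- `E_{2k} = (-1)^k Δ(0,k)`, where `Δ` is defined by `Δ(x,0)=1` and
`Δ(x,k+1)=(x+1)(2x+1)Δ(x+1,k) - x²Δ(x,k)`, and the Euler numbers `E_n` are defined by
`∑ E_n t^n/n! = 1/cosh t`. -/
theorem euler_number_eq_delta (E : ℕ → ℚ)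
    (hE : (PowerSeries.mk fun n => E n / (n.factorial : ℚ)) *
      (PowerSeries.mk fun n => ((1 : ℚ) + (-1) ^ n) / (2 * (n.factorial : ℚ))) = 1)
    (Δ : ℚ → ℕ → ℚ)
    (hΔ0 : ∀ x : ℚ, Δ x 0 = 1)
    (hΔ : ∀ (x : ℚ) (k : ℕ),
      Δ x (k + 1) = (x + 1) * (2 * x + 1) * Δ (x + 1) k - x ^ 2 * Δ x k) :
    ∀ k : ℕ, E (2 * k) = (-1) ^ k * Δ 0 k := by
  intro k
  have hΔ0k : Δ 0 k = deltaCoeff ℚ 0 k := by exact_mod_cast eq_deltaCoeff_of_rec Δ hΔ0 hΔ 0 k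
  rw [euler_two_mul_eq_coeff_sec E hE, hΔ0k, deltaCoeff, coeff_two_mul_deltaSeries_zero]
  ring
end
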